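/- arXiv:1909.09445 — 2 statements merged into one kernel-verified Lean document; each statement's English description precedes it below -/
import Mathlib

section
/- Let S be an axis-parallel square containing the rectangle R_{abcd}, and let ℓ be a segment of L disjoint from R_{abcd} that intersects both the vertical line λ_a through the left side of R_{abcd} and the horizontal line λ_d through the bottom side of R_{abcd}, at points outside R_{abcd} (to the lower-left). If ℓ_p is a segment of L disjoint from R_{abcd} intersecting λ_a and λ_d such that its intersection points with λ_a and λ_d are farthest (lowest on λ_a and leftmost on λ_d) among all such segments, then any axis-parallel square S containing R_{abcd} that intersects ℓ_p also intersects ℓ. -/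
/-!
Parametrise both segments by the same barycentric coordinates. Since `ℓp` starts below `ℓ` on
`λ_a` and to the left of `ℓ` on `λ_d`, the point of `ℓ` with the coordinates of a point `z` of
`ℓp ∩ S` lies coordinatewise between `z` and the lower-left corner of `R_{abcd}`. Both of these
lie in the square `S`, which is an order interval of `ℝ × ℝ`, so that point of `ℓ` is in `S` too.
-/

open Set

theorem exists_le_mem_segment_of_le {E : Type*} [AddCommGroup E] [PartialOrder E]
    [IsOrderedAddMonoid E] [Module ℝ E] [PosSMulMono ℝ E] {x y x' y' z : E}
    (hx : x ≤ x') (hy : y ≤ y') (hz : z ∈ segment ℝ x y) :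
    ∃ w ∈ segment ℝ x' y', z ≤ w := by
  obtain ⟨u, v, hu, hv, huv, rfl⟩ := hz
  exact ⟨u • x' + v • y', ⟨u, v, hu, hv, huv, rfl⟩,
    add_le_add (smul_le_smul_of_nonneg_left hx hu) (smul_le_smul_of_nonneg_left hy hv)⟩

theorem Set.OrdConnected.inter_segment_nonempty_of_le {E : Type*} [AddCommGroup E]
    [PartialOrder E] [IsOrderedAddMonoid E] [Module ℝ E] [PosSMulMono ℝ E] {S : Set E}
    (hS : S.OrdConnected) {x y x' y' c : E} (hx : x ≤ x') (hy : y ≤ y') (hx' : x' ≤ c)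
    (hy' : y' ≤ c) (hc : c ∈ S) (hhit : (S ∩ segment ℝ x y).Nonempty) :
    (S ∩ segment ℝ x' y').Nonempty := by
  obtain ⟨z, hzS, hz⟩ := hhit
  obtain ⟨w, hw, hzw⟩ := exists_le_mem_segment_of_le hx hy hz
  have hwc : w ≤ c := (convex_Iic c).segment_subset hx' hy' hw
  exact ⟨w, hS.out hzS hc ⟨hzw, hwc⟩, hw⟩

theorem stmt2_general (ax cx dy ty : ℝ) (hx : ax ≤ cx) (hy : dy ≤ ty)
    (pℓ qℓ pp qp : ℝ)
    (hpp : pp ≤ pℓ) (hpℓ : pℓ ≤ dy) (hqp : qp ≤ qℓ) (hqℓ : qℓ ≤ ax)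
    (ℓ ℓp : Set (ℝ × ℝ))
    (hℓ : ℓ = segment ℝ (ax, pℓ) (qℓ, dy))
    (hℓp : ℓp = segment ℝ (ax, pp) (qp, dy))
    (a b s : ℝ)
    (hR : Set.Icc ax cx ×ˢ Set.Icc dy ty ⊆
          Set.Icc a (a + s) ×ˢ Set.Icc b (b + s))
    (hhit : ((Set.Icc a (a + s) ×ˢ Set.Icc b (b + s)) ∩ ℓp).Nonempty) :
    ((Set.Icc a (a + s) ×ˢ Set.Icc b (b + s)) ∩ ℓ).Nonempty := by
  have hcorner : ((ax, dy) : ℝ × ℝ) ∈ Icc a (a + s) ×ˢ Icc b (b + s) :=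
    hR ⟨⟨le_rfl, hx⟩, le_rfl, hy⟩
  rw [Icc_prod_Icc] at hcorner hhit ⊢
  subst hℓ hℓp
  exact ordConnected_Icc.inter_segment_nonempty_of_le (Prod.mk_le_mk.2 ⟨le_rfl, hpp⟩)
    (Prod.mk_le_mk.2 ⟨hqp, le_rfl⟩) (Prod.mk_le_mk.2 ⟨le_rfl, hpℓ⟩)
    (Prod.mk_le_mk.2 ⟨hqℓ, le_rfl⟩) hcorner hhit

/-- If `ℓp` is the farthest segment crossing the lower-left corner
region of the rectangle `R_{abcd}` (lowest on the left supporting line, leftmost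
on the bottom supporting line), then any axis-parallel square containing
`R_{abcd}` that hits `ℓp` also hits any other such segment `ℓ`. -/
theorem stmt2 (ax cx dy ty : ℝ) (hx : ax ≤ cx) (hy : dy ≤ ty)
    (pℓ qℓ pp qp : ℝ)
    (hpp : pp ≤ pℓ) (hpℓ : pℓ ≤ dy) (hqp : qp ≤ qℓ) (hqℓ : qℓ ≤ ax)
    (ℓ ℓp : Set (ℝ × ℝ))
    (hℓ : ℓ = segment ℝ (ax, pℓ) (qℓ, dy))
    (hℓp : ℓp = segment ℝ (ax, pp) (qp, dy))
    (a b s : ℝ) (hs : 0 ≤ s)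
    (hR : Set.Icc ax cx ×ˢ Set.Icc dy ty ⊆
          Set.Icc a (a + s) ×ˢ Set.Icc b (b + s))
    (hhit : ((Set.Icc a (a + s) ×ˢ Set.Icc b (b + s)) ∩ ℓp).Nonempty) :
    ((Set.Icc a (a + s) ×ˢ Set.Icc b (b + s)) ∩ ℓ).Nonempty :=
  stmt2_general ax cx dy ty hx hy pℓ qℓ pp qp hpp hpℓ hqp hqℓ ℓ ℓp hℓ hℓp a b s hR hhit
end

section
/- Let ℓ and ℓ' be two segments in the closed lower-left quadrant Q = {(x,y): x ≤ x₀, y ≤ y₀}, both intersecting the vertical line x = x₀ and the horizontal line y = y₀, with ℓ' 'inside' ℓ (the intersection of ℓ' with x = x₀ is above that of ℓ, and the intersection of ℓ' with y = y₀ is to the right of that of ℓ). Then any convex set containing the point (x₀, y₀) and intersecting ℓ must intersect ℓ'. -/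
/-- In the lower-left quadrant of `(x₀, y₀)`, if the segment `ℓ'`
lies "inside" the segment `ℓ` (both joining the vertical line `x = x₀` to the
horizontal line `y = y₀`), then any convex set containing `(x₀, y₀)` and
meeting `ℓ` must meet `ℓ'`. -/
theorem stmt3 (x₀ y₀ p p' q q' : ℝ)
    (hp : p ≤ p') (hp' : p' ≤ y₀) (hq : q ≤ q') (hq' : q' ≤ x₀)
    (C : Set (ℝ × ℝ)) (hC : Convex ℝ C) (hcorner : ((x₀, y₀) : ℝ × ℝ) ∈ C)
    (hhit : (C ∩ segment ℝ (x₀, p) (q, y₀)).Nonempty) :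
    (C ∩ segment ℝ (x₀, p') (q', y₀)).Nonempty := by
  obtain ⟨z, hzC, hzl⟩ := hhit
  rcases eq_or_lt_of_le hq' with rfl | hq'lt
  · exact ⟨(q', y₀), hcorner, right_mem_segment ℝ _ _⟩
  rcases eq_or_lt_of_le hp' with rfl | hp'lt
  · exact ⟨(x₀, p'), hcorner, left_mem_segment ℝ _ _⟩
  obtain ⟨z1, z2⟩ := z
  obtain ⟨a, b, ha, hb, hab, hz⟩ := hzl
  have hz1 : a * x₀ + b * q = z1 := by
    have := congrArg Prod.fst hz; simpa using this
  have hz2 : a * p + b * y₀ = z2 := by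
    have := congrArg Prod.snd hz; simpa using this
  have ha' : a = 1 - b := by linarith
  subst ha'
  have hz1le : z1 ≤ x₀ := by
    nlinarith [mul_nonneg hb (show (0:ℝ) ≤ x₀ - q by linarith)]
  have hz2le : z2 ≤ y₀ := by
    nlinarith [mul_nonneg ha (show (0:ℝ) ≤ y₀ - p by linarith)]
  set F : ℝ := (y₀ - p') * (z1 - x₀) + (x₀ - q') * (z2 - p') with hF
  have hFle : F ≤ 0 := by
    rw [hF, ← hz1, ← hz2]
    nlinarith [mul_nonneg ha (mul_nonneg (show (0:ℝ) ≤ x₀ - q' by linarith)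
        (show (0:ℝ) ≤ p' - p by linarith)),
      mul_nonneg hb (mul_nonneg (show (0:ℝ) ≤ y₀ - p' by linarith)
        (show (0:ℝ) ≤ q' - q by linarith))]
  have hGpos : (0:ℝ) < (x₀ - q') * (y₀ - p') :=
    mul_pos (by linarith) (by linarith)
  set D : ℝ := (x₀ - q') * (y₀ - p') - F with hD
  have hDpos : (0:ℝ) < D := by rw [hD]; linarith
  have hDne : D ≠ 0 := hDpos.ne'
  set s : ℝ := -F / D with hs
  have hs0 : 0 ≤ s := div_nonneg (by linarith) hDpos.le
  have hs1 : s ≤ 1 := by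
    rw [hs, div_le_one hDpos]; rw [hD]; linarith
  set w1 : ℝ := (1 - s) * z1 + s * x₀ with hw1
  set w2 : ℝ := (1 - s) * z2 + s * y₀ with hw2
  have hwC : ((w1, w2) : ℝ × ℝ) ∈ C := by
    have := hC hzC hcorner (by linarith : (0:ℝ) ≤ 1 - s) hs0 (by ring)
    simpa [Prod.ext_iff, hw1, hw2] using this
  have hfw : (y₀ - p') * (w1 - x₀) + (x₀ - q') * (w2 - p') = 0 := by
    rw [hw1, hw2, hs]
    have key : (1 - -F / D) * F + (-F / D) * ((x₀ - q') * (y₀ - p')) = 0 := by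
      field_simp
      rw [hD]; ring
    calc (y₀ - p') * ((1 - -F / D) * z1 + -F / D * x₀ - x₀) +
        (x₀ - q') * ((1 - -F / D) * z2 + -F / D * y₀ - p')
        = (1 - -F / D) * F + (-F / D) * ((x₀ - q') * (y₀ - p')) := by
          rw [hF]; ring
      _ = 0 := key
  have hw1le : w1 ≤ x₀ := by
    rw [hw1]; nlinarith [mul_nonneg (show (0:ℝ) ≤ 1 - s by linarith)
      (show (0:ℝ) ≤ x₀ - z1 by linarith)]
  have hw2le : w2 ≤ y₀ := by
    rw [hw2]; nlinarith [mul_nonneg (show (0:ℝ) ≤ 1 - s by linarith)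
      (show (0:ℝ) ≤ y₀ - z2 by linarith)]
  have hw1ge : q' ≤ w1 := by
    nlinarith [hfw, mul_nonneg (show (0:ℝ) ≤ x₀ - q' by linarith)
      (show (0:ℝ) ≤ y₀ - w2 by linarith),
      mul_pos (show (0:ℝ) < y₀ - p' by linarith)
        (show (0:ℝ) < x₀ - q' by linarith)]
  set u : ℝ := (x₀ - w1) / (x₀ - q') with hu
  have hxq : (0:ℝ) < x₀ - q' := by linarith
  have hu0 : 0 ≤ u := div_nonneg (by linarith) hxq.le
  have hu1 : u ≤ 1 := by rw [hu, div_le_one hxq]; linarith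
  have huxy : u * (x₀ - q') = x₀ - w1 := by
    rw [hu]; field_simp
  refine ⟨(w1, w2), hwC, 1 - u, u, by linarith, hu0, by ring, ?_⟩
  simp only [Prod.smul_mk, Prod.mk_add_mk, Prod.mk.injEq, smul_eq_mul]
  constructor
  · linear_combination -huxy
  · have h2 : (x₀ - q') * ((1 - u) * p' + u * y₀ - w2) = 0 := by
      linear_combination (y₀ - p') * huxy - hfw
    have := mul_eq_zero.mp h2
    rcases this with h | h
    · exact absurd h hxq.ne'
    · linarith
end
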